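/- Assume Assumption A holds, that μ(ω) > 0 for every ω ∈ Ω (write μ_min = min_ω μ(ω)), and that 0 ≤ γ with γ/(μ_min·Δ) < 1. Then for every ε > 0 there exists a direct-revelation signaling scheme π (with signal set S = A) such that U_μ(π,ρ) ≥ OPT^BP(μ) − γ/(μ_min·Δ) − ε for every γ-best-responding receiver strategy ρ. -/

import Mathlib

open Finset
open scoped BigOperators Classical

noncomputable section

/-- `p` is a family of probability distributions on the finite set `β`, indexed by `α`. -/
def IsDist {α β : Type*} [Fintype β] (p : α → β → ℝ) : Prop :=
  (∀ x y, 0 ≤ p x y) ∧ ∀ x, ∑ y, p x y = 1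

/-- `p` is a probability distribution on the finite set `β`. -/
def IsProb {β : Type*} [Fintype β] (p : β → ℝ) : Prop :=
  (∀ y, 0 ≤ p y) ∧ ∑ y, p y = 1

/-- The marginal probability `π(s)` of signal `s` under prior `μ` and signaling scheme `π`. -/
def marg {Ω S : Type*} [Fintype Ω] (μ : Ω → ℝ) (π : Ω → S → ℝ) (s : S) : ℝ :=
  ∑ ω, μ ω * π ω s

/-- The posterior probability `π(ω|s)` of state `ω` given signal `s`. -/
def post {Ω S : Type*} [Fintype Ω] (μ : Ω → ℝ) (π : Ω → S → ℝ) (ω : Ω) (s : S) : ℝ :=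
  μ ω * π ω s / marg μ π s

/-- The receiver's expected utility `v(a, μ_s)` of action `a` under the posterior of signal `s`. -/
def vPost {Ω S A : Type*} [Fintype Ω] (μ : Ω → ℝ) (π : Ω → S → ℝ)
    (v : A → Ω → ℝ) (a : A) (s : S) : ℝ :=
  ∑ ω, post μ π ω s * v a ω

/-- Action `a` is `γ`-best-responding to signal `s`. -/
def IsBR {Ω S A : Type*} [Fintype Ω] [Fintype A] (μ : Ω → ℝ) (π : Ω → S → ℝ)
    (v : A → Ω → ℝ) (γ : ℝ) (a : A) (s : S) : Prop :=
  ∀ a' : A, vPost μ π v a' s - γ ≤ vPost μ π v a s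

/-- `ρ` is a `γ`-best-responding receiver strategy: on every signal that is sent with positive
probability, it puts probability `1` on `γ`-best-responding actions (equivalently, probability `0`
on every action that is not `γ`-best-responding). -/
def IsBRStrategy {Ω S A : Type*} [Fintype Ω] [Fintype A] (μ : Ω → ℝ) (π : Ω → S → ℝ)
    (v : A → Ω → ℝ) (γ : ℝ) (ρ : S → A → ℝ) : Prop :=
  ∀ s, 0 < marg μ π s → ∀ a, ¬ IsBR μ π v γ a s → ρ s a = 0

/-- `ρ` is a `(γ, δ)`-best-responding receiver strategy: on every signal that is sent with
positive probability, it puts probability at least `1 - δ` on `γ`-best-responding actions. -/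
def IsApproxBRStrategy {Ω S A : Type*} [Fintype Ω] [Fintype A] (μ : Ω → ℝ) (π : Ω → S → ℝ)
    (v : A → Ω → ℝ) (γ δ : ℝ) (ρ : S → A → ℝ) : Prop :=
  ∀ s, 0 < marg μ π s →
    1 - δ ≤ ∑ a ∈ Finset.univ.filter (fun a => IsBR μ π v γ a s), ρ s a

/-- The sender's expected utility `U_μ(π, ρ)`. -/
def senderU {Ω S A : Type*} [Fintype Ω] [Fintype S] [Fintype A] (μ : Ω → ℝ) (π : Ω → S → ℝ)
    (u : A → Ω → ℝ) (ρ : S → A → ℝ) : ℝ :=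
  ∑ ω, ∑ s, μ ω * π ω s * ∑ a, ρ s a * u a ω

/-- The obedient strategy for a direct-revelation scheme: take the recommended action. -/
def obedient {A : Type*} : A → A → ℝ := fun s a => if a = s then 1 else 0

/-- `OPT^BP(μ)`: the supremum of the sender's expected utility over direct-revelation schemes
(signal set `S = A`) and best-responding (`0`-best-responding) receiver strategies. -/
def OPTBP {Ω A : Type*} [Fintype Ω] [Fintype A] (μ : Ω → ℝ) (v u : A → Ω → ℝ) : ℝ :=
  sSup {x | ∃ (π : Ω → A → ℝ) (ρ : A → A → ℝ), IsDist π ∧ IsDist ρ ∧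
    IsBRStrategy μ π v 0 ρ ∧ x = senderU μ π u ρ}

/-- The `α`-robustification of a direct-revelation scheme `π`, where `aOf ω` is the receiver's
unique optimal action at state `ω`. -/
def robustify {Ω A : Type*} (π : Ω → A → ℝ) (aOf : Ω → A) (α : ℝ) : Ω → A → ℝ :=
  fun ω s => (1 - α) * π ω s + if s = aOf ω then α else 0

/-- `μ(Ω_a)`: the prior mass of the set of states whose unique optimal action is `a`. -/
def massOf {Ω A : Type*} [Fintype Ω] (μ : Ω → ℝ) (aOf : Ω → A) (a : A) : ℝ :=
  ∑ ω ∈ Finset.univ.filter (fun ω => aOf ω = a), μ ω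

/-- `μ_min = min_ω μ(ω)`. -/
def minPrior {Ω : Type*} [Fintype Ω] [Nonempty Ω] (μ : Ω → ℝ) : ℝ :=
  Finset.univ.inf' Finset.univ_nonempty μ

/-- The advantage term of recommendation `s` against deviation `a` in a direct-revelation
scheme `π`: the advantage `adv_π(s)` is the minimum of this quantity over `a ≠ s`. -/
def advTerm {Ω A : Type*} [Fintype Ω] (μ : Ω → ℝ) (π : Ω → A → ℝ) (v : A → Ω → ℝ)
    (s a : A) : ℝ :=
  ∑ ω, post μ π ω s * (v s ω - v a ω)

/-!
Pass a near-optimal best-responding scheme through the receiver's strategy: the resulting direct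
scheme is obedient and gives the sender the same utility. Then mix it, with weight `α`, with the
scheme recommending the receiver's optimal action `a_ω`. Every recommendation `s` is now sent with
probability at least `α` by the states of `Ω_s`, where obeying beats any deviation by `Δ`; so,
unnormalized, obeying beats every deviation by at least `α μ_min Δ`, and since the marginal of `s`
is at most `1` it beats it by more than `γ` once `α μ_min Δ > γ`. Hence every `γ`-best-responding
receiver obeys, and the mixture costs the sender at most `α`, which can be taken arbitrarily close
to `γ/(μ_min Δ)`.
-/

lemma IsDist.le_one {α β : Type*} [Fintype β] {p : α → β → ℝ} (hp : IsDist p) (x : α) (y : β) :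
    p x y ≤ 1 :=
  (single_le_sum (fun z _ => hp.1 x z) (mem_univ y)).trans (hp.2 x).le

lemma IsDist.comp {α β γ : Type*} [Fintype β] {p : α → β → ℝ} (hp : IsDist p) (f : γ → α) :
    IsDist (fun x => p (f x)) :=
  ⟨fun x => hp.1 (f x), fun x => hp.2 (f x)⟩

lemma isDist_obedient {A : Type*} [Fintype A] : IsDist (obedient (A := A)) :=
  ⟨fun s a => by unfold obedient; split_ifs <;> norm_num, fun s => by simp [obedient]⟩

section

variable {Ω S A : Type*} [Fintype Ω]

lemma marg_le_one {μ : Ω → ℝ} {π : Ω → S → ℝ} [Fintype S] (hμ : IsProb μ) (hπ : IsDist π)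
    (s : S) : marg μ π s ≤ 1 :=
  calc marg μ π s ≤ ∑ ω, μ ω :=
        sum_le_sum fun ω _ => mul_le_of_le_one_right (hμ.1 ω) (hπ.le_one ω s)
    _ = 1 := hμ.2

lemma marg_mul_vPost {μ : Ω → ℝ} {π : Ω → S → ℝ} {s : S} (hs : marg μ π s ≠ 0)
    (v : A → Ω → ℝ) (a : A) :
    marg μ π s * vPost μ π v a s = ∑ ω, μ ω * π ω s * v a ω := by
  unfold vPost post
  rw [mul_sum]
  exact sum_congr rfl fun ω _ => by field_simp

lemma isBR_iff_sum [Fintype A] {μ : Ω → ℝ} {π : Ω → S → ℝ} {v : A → Ω → ℝ} {γ : ℝ}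
    {a : A} {s : S} (hs : 0 < marg μ π s) :
    IsBR μ π v γ a s ↔
      ∀ b, ∑ ω, μ ω * π ω s * v b ω - γ * marg μ π s ≤ ∑ ω, μ ω * π ω s * v a ω := by
  simp only [IsBR, ← marg_mul_vPost hs.ne']
  refine forall_congr' fun b => ?_
  rw [← mul_le_mul_iff_right₀ hs, mul_sub, mul_comm _ γ]

lemma exists_isBRStrategy [Fintype A] [Nonempty A] (μ : Ω → ℝ) (π : Ω → S → ℝ) (v : A → Ω → ℝ) :
    ∃ ρ : S → A → ℝ, IsDist ρ ∧ IsBRStrategy μ π v 0 ρ := by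
  choose best hbest using fun s : S =>
    exists_max_image univ (fun a => vPost μ π v a s) univ_nonempty
  refine ⟨fun s => obedient (best s), isDist_obedient.comp best, fun s _ a ha => ?_⟩
  have hne : a ≠ best s := by
    rintro rfl
    exact ha fun b => by simpa using (hbest s).2 b (mem_univ b)
  simp [obedient, hne]

end

section

variable {Ω S A : Type*} [Fintype Ω] [Fintype S] [Fintype A]

lemma senderU_le_one {μ : Ω → ℝ} {π : Ω → S → ℝ} {u : A → Ω → ℝ} {ρ : S → A → ℝ}
    (hμ : IsProb μ) (hπ : IsDist π) (hu : ∀ a ω, 0 ≤ u a ω ∧ u a ω ≤ 1) (hρ : IsDist ρ) :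
    senderU μ π u ρ ≤ 1 := by
  have hρu : ∀ s ω, ∑ a, ρ s a * u a ω ≤ 1 := fun s ω =>
    calc ∑ a, ρ s a * u a ω ≤ ∑ a, ρ s a :=
          sum_le_sum fun a _ => mul_le_of_le_one_right (hρ.1 s a) (hu a ω).2
      _ = 1 := hρ.2 s
  calc senderU μ π u ρ ≤ ∑ ω, ∑ s, μ ω * π ω s :=
        sum_le_sum fun ω _ => sum_le_sum fun s _ =>
          mul_le_of_le_one_right (mul_nonneg (hμ.1 ω) (hπ.1 ω s)) (hρu s ω)
    _ = ∑ ω, μ ω := sum_congr rfl fun ω _ => by rw [← mul_sum, hπ.2 ω, mul_one]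
    _ = 1 := hμ.2

lemma senderU_obedient (μ : Ω → ℝ) (π : Ω → A → ℝ) (u : A → Ω → ℝ) :
    senderU μ π u obedient = ∑ ω, ∑ s, μ ω * π ω s * u s ω := by
  simp [senderU, obedient]

lemma exists_lt_senderU_of_lt_OPTBP [Nonempty A] {μ : Ω → ℝ} {v u : A → Ω → ℝ} {x : ℝ}
    (hx : x < OPTBP μ v u) :
    ∃ (π : Ω → A → ℝ) (ρ : A → A → ℝ), IsDist π ∧ IsDist ρ ∧ IsBRStrategy μ π v 0 ρ ∧
      x < senderU μ π u ρ := by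
  obtain ⟨a₀⟩ := ‹Nonempty A›
  obtain ⟨ρ, hρ, hBR⟩ := exists_isBRStrategy μ (fun _ => obedient a₀) v
  have hne : {x | ∃ (π : Ω → A → ℝ) (ρ : A → A → ℝ), IsDist π ∧ IsDist ρ ∧
      IsBRStrategy μ π v 0 ρ ∧ x = senderU μ π u ρ}.Nonempty :=
    ⟨_, _, ρ, isDist_obedient.comp fun _ => a₀, hρ, hBR, rfl⟩
  obtain ⟨_, ⟨π, ρ, hπ, hρ, hBR, rfl⟩, hlt⟩ := exists_lt_of_lt_csSup hne hx
  exact ⟨π, ρ, hπ, hρ, hBR, hlt⟩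

end

def IsObedient {Ω A : Type*} [Fintype Ω] (μ : Ω → ℝ) (π : Ω → A → ℝ) (v : A → Ω → ℝ) : Prop :=
  ∀ s a, 0 ≤ ∑ ω, μ ω * π ω s * (v s ω - v a ω)

def revelationScheme {Ω S A : Type*} [Fintype S] (π : Ω → S → ℝ) (ρ : S → A → ℝ) :
    Ω → A → ℝ :=
  fun ω a => ∑ s, π ω s * ρ s a

lemma IsDist.revelationScheme {Ω S A : Type*} [Fintype S] [Fintype A] {π : Ω → S → ℝ}
    {ρ : S → A → ℝ} (hπ : IsDist π) (hρ : IsDist ρ) :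
    IsDist (revelationScheme π ρ) := by
  refine ⟨fun ω a => sum_nonneg fun s _ => mul_nonneg (hπ.1 ω s) (hρ.1 s a), fun ω => ?_⟩
  simp only [_root_.revelationScheme]
  rw [sum_comm]
  simp only [← mul_sum, hρ.2, mul_one, hπ.2]

section

variable {Ω S A : Type*} [Fintype Ω] [Fintype S] [Fintype A]
  {μ : Ω → ℝ} {π : Ω → S → ℝ} {ρ : S → A → ℝ}

lemma senderU_revelationScheme (u : A → Ω → ℝ) :
    senderU μ (revelationScheme π ρ) u obedient = senderU μ π u ρ := by
  rw [senderU_obedient]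
  refine sum_congr rfl fun ω _ => ?_
  simp only [revelationScheme, mul_sum, sum_mul]
  rw [sum_comm]
  exact sum_congr rfl fun s _ => sum_congr rfl fun a _ => by ring

lemma IsBRStrategy.mul_sum_sub_nonneg {v : A → Ω → ℝ} (hμ : ∀ ω, 0 ≤ μ ω) (hπ : IsDist π)
    (hρ : IsDist ρ) (hBR : IsBRStrategy μ π v 0 ρ) (t : S) (a b : A) :
    0 ≤ ρ t a * ∑ ω, μ ω * π ω t * (v a ω - v b ω) := by
  have hjoint : ∀ ω, 0 ≤ μ ω * π ω t := fun ω => mul_nonneg (hμ ω) (hπ.1 ω t)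
  rcases (sum_nonneg fun ω _ => hjoint ω : 0 ≤ marg μ π t).eq_or_lt with hzero | hpos
  · have hvanish := (sum_eq_zero_iff_of_nonneg fun ω _ => hjoint ω).1 hzero.symm
    simp [hvanish]
  by_cases hbr : IsBR μ π v 0 a t
  · have hle := (isBR_iff_sum hpos).1 hbr b
    rw [zero_mul, sub_zero] at hle
    refine mul_nonneg (hρ.1 t a) ?_
    simpa only [mul_sub, sum_sub_distrib, sub_nonneg] using hle
  · simp [hBR t hpos a hbr]

lemma isObedient_revelationScheme {v : A → Ω → ℝ} (hμ : ∀ ω, 0 ≤ μ ω) (hπ : IsDist π)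
    (hρ : IsDist ρ) (hBR : IsBRStrategy μ π v 0 ρ) :
    IsObedient μ (revelationScheme π ρ) v := by
  intro a b
  have hexpand : ∑ ω, μ ω * revelationScheme π ρ ω a * (v a ω - v b ω)
      = ∑ t, ρ t a * ∑ ω, μ ω * π ω t * (v a ω - v b ω) := by
    simp only [revelationScheme, mul_sum, sum_mul]
    rw [sum_comm]
    exact sum_congr rfl fun t _ => sum_congr rfl fun ω _ => by ring
  rw [hexpand]
  exact sum_nonneg fun t _ => hBR.mul_sum_sub_nonneg hμ hπ hρ t a b

end

lemma IsDist.robustify {Ω A : Type*} [Fintype A] {π : Ω → A → ℝ} {aOf : Ω → A} {α : ℝ}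
    (hπ : IsDist π) (hα0 : 0 ≤ α) (hα1 : α ≤ 1) :
    IsDist (robustify π aOf α) := by
  refine ⟨fun ω s => ?_, fun ω => ?_⟩
  · have := mul_nonneg (sub_nonneg.2 hα1) (hπ.1 ω s)
    unfold _root_.robustify
    split_ifs <;> linarith
  · simp [_root_.robustify, sum_add_distrib, ← mul_sum, hπ.2 ω]

section

variable {Ω A : Type*} [Fintype Ω] {μ : Ω → ℝ} {π : Ω → A → ℝ} {aOf : Ω → A}
  {α : ℝ}

lemma marg_robustify_pos [Fintype A] (hμ : ∀ ω, 0 ≤ μ ω) (hπ : IsDist π) (hα0 : 0 < α)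
    (hα1 : α ≤ 1) {ω₀ : Ω} (hμω₀ : 0 < μ ω₀) : 0 < marg μ (robustify π aOf α) (aOf ω₀) := by
  have hr := hπ.robustify (aOf := aOf) hα0.le hα1
  calc 0 < μ ω₀ * α := mul_pos hμω₀ hα0
    _ ≤ μ ω₀ * robustify π aOf α ω₀ (aOf ω₀) := by
        refine mul_le_mul_of_nonneg_left ?_ (hμ ω₀)
        simpa [robustify] using mul_nonneg (sub_nonneg.2 hα1) (hπ.1 ω₀ (aOf ω₀))
    _ ≤ marg μ (robustify π aOf α) (aOf ω₀) :=
        single_le_sum (f := fun ω => μ ω * robustify π aOf α ω (aOf ω₀))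
          (fun ω _ => mul_nonneg (hμ ω) (hr.1 ω _)) (mem_univ ω₀)

lemma sum_mul_robustify (s : A) (f : Ω → ℝ) :
    ∑ ω, μ ω * robustify π aOf α ω s * f ω
      = (1 - α) * ∑ ω, μ ω * π ω s * f ω + α * ∑ ω ∈ univ.filter (aOf · = s), μ ω * f ω := by
  rw [sum_filter, mul_sum, mul_sum, ← sum_add_distrib]
  refine sum_congr rfl fun ω _ => ?_
  rcases eq_or_ne (aOf ω) s with h | h
  · simp [robustify, h]; ring
  · simp [robustify, h, Ne.symm h]; ring

lemma robustify_advantage [Nonempty Ω] {v : A → Ω → ℝ} {Δ : ℝ} (hπ : IsObedient μ π v)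
    (hα0 : 0 ≤ α) (hα1 : α ≤ 1) (hμpos : ∀ ω, 0 < μ ω) (hΔ0 : 0 ≤ Δ)
    (hΔ : ∀ ω a, a ≠ aOf ω → Δ ≤ v (aOf ω) ω - v a ω) {ω₀ : Ω} {s a : A} (hω₀ : aOf ω₀ = s)
    (ha : a ≠ s) :
    α * (minPrior μ * Δ) ≤ ∑ ω, μ ω * robustify π aOf α ω s * (v s ω - v a ω) := by
  have hfiber : minPrior μ * Δ ≤ ∑ ω ∈ univ.filter (aOf · = s), μ ω * (v s ω - v a ω) :=
    calc minPrior μ * Δ ≤ μ ω₀ * Δ := mul_le_mul_of_nonneg_right (inf'_le _ (mem_univ _)) hΔ0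
      _ ≤ μ ω₀ * (v s ω₀ - v a ω₀) :=
        mul_le_mul_of_nonneg_left (hω₀ ▸ hΔ ω₀ a (hω₀ ▸ ha)) (hμpos _).le
      _ ≤ _ := by
        refine single_le_sum (f := fun ω => μ ω * (v s ω - v a ω)) (fun ω hω => ?_)
          (mem_filter.2 ⟨mem_univ _, hω₀⟩)
        have hωs : aOf ω = s := (mem_filter.1 hω).2
        exact mul_nonneg (hμpos ω).le (hΔ0.trans (hωs ▸ hΔ ω a (hωs ▸ ha)))
  rw [sum_mul_robustify]
  nlinarith [mul_nonneg (sub_nonneg.2 hα1) (hπ s a)]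

lemma eq_obedient_of_lt_sum [Fintype A] {v : A → Ω → ℝ} {γ : ℝ} {ρ : A → A → ℝ}
    (hmarg : ∀ s, 0 < marg μ π s)
    (hadv : ∀ s a, a ≠ s → γ * marg μ π s < ∑ ω, μ ω * π ω s * (v s ω - v a ω))
    (hρ : IsDist ρ) (hBR : IsBRStrategy μ π v γ ρ) : ρ = obedient := by
  have hoff : ∀ s a, a ≠ s → ρ s a = 0 := fun s a has => hBR s (hmarg s) a fun hbr => by
    have hle := (isBR_iff_sum (hmarg s)).1 hbr s
    have hlt := hadv s a has
    simp only [mul_sub, sum_sub_distrib] at hlt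
    linarith
  funext s a
  by_cases has : a = s
  · subst has
    rw [show obedient a a = 1 by simp [obedient], ← hρ.2 a,
      sum_eq_single a (fun b _ hb => hoff a b hb) (by simp)]
  · simp [obedient, has, hoff s a has]

lemma IsBRStrategy.eq_obedient_of_robustify [Fintype A] [Nonempty Ω] {v : A → Ω → ℝ}
    {Δ γ : ℝ} {ρ : A → A → ℝ} (hμ : IsProb μ) (hμpos : ∀ ω, 0 < μ ω) (hπ : IsDist π)
    (hob : IsObedient μ π v) (hα0 : 0 < α) (hα1 : α ≤ 1) (hΔ0 : 0 ≤ Δ)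
    (hΔ : ∀ ω a, a ≠ aOf ω → Δ ≤ v (aOf ω) ω - v a ω) (hOnto : ∀ a, ∃ ω, aOf ω = a)
    (hγ : 0 ≤ γ) (hγα : γ < α * (minPrior μ * Δ)) (hρ : IsDist ρ)
    (hBR : IsBRStrategy μ (robustify π aOf α) v γ ρ) : ρ = obedient := by
  have hr : IsDist (robustify π aOf α) := hπ.robustify hα0.le hα1
  refine eq_obedient_of_lt_sum (fun s => ?_) (fun s a has => ?_) hρ hBR
  · obtain ⟨ω, rfl⟩ := hOnto s
    exact marg_robustify_pos hμ.1 hπ hα0 hα1 (hμpos ω)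
  · obtain ⟨ω, hω⟩ := hOnto s
    calc γ * marg μ (robustify π aOf α) s ≤ γ := mul_le_of_le_one_right hγ (marg_le_one hμ hr s)
      _ < α * (minPrior μ * Δ) := hγα
      _ ≤ _ := robustify_advantage hob hα0.le hα1 hμpos hΔ0 hΔ hω has

end

lemma senderU_robustify_obedient_ge {Ω A : Type*} [Fintype Ω] [Fintype A] {μ : Ω → ℝ}
    {π : Ω → A → ℝ} {u : A → Ω → ℝ} (hμ : ∀ ω, 0 ≤ μ ω) (hu : ∀ a ω, 0 ≤ u a ω)
    (aOf : Ω → A) {α : ℝ} (hα : 0 ≤ α) :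
    (1 - α) * senderU μ π u obedient ≤ senderU μ (robustify π aOf α) u obedient := by
  simp only [senderU_obedient, mul_sum]
  refine sum_le_sum fun ω _ => sum_le_sum fun s _ => ?_
  have hself : 0 ≤ if s = aOf ω then α else 0 := by split_ifs <;> simp [hα]
  have := mul_nonneg (mul_nonneg (hμ ω) hself) (hu s ω)
  show (1 - α) * (μ ω * π ω s * u s ω) ≤ μ ω * ((1 - α) * π ω s + _) * u s ω
  linarith

theorem bp_lower_bound_general
    {Ω A : Type*} [Fintype Ω] [Fintype A] [Nonempty Ω] [Nonempty A]
    (μ : Ω → ℝ) (hμ : IsProb μ) (hμpos : ∀ ω, 0 < μ ω)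
    (v : A → Ω → ℝ)
    (u : A → Ω → ℝ) (hu : ∀ a ω, 0 ≤ u a ω ∧ u a ω ≤ 1)
    -- Assumption A
    (aOf : Ω → A)
    (Δ : ℝ) (hΔpos : 0 < Δ) (hΔ : ∀ ω a, a ≠ aOf ω → Δ ≤ v (aOf ω) ω - v a ω)
    (hOnto : ∀ a, ∃ ω, aOf ω = a)
    (γ : ℝ) (hγ : 0 ≤ γ) (hγ1 : γ / (minPrior μ * Δ) < 1) :
    ∀ ε > 0, ∃ π : Ω → A → ℝ, IsDist π ∧
      ∀ ρ : A → A → ℝ, IsDist ρ → IsBRStrategy μ π v γ ρ →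
        OPTBP μ v u - γ / (minPrior μ * Δ) - ε ≤ senderU μ π u ρ := by
  intro ε hε
  have hmΔ : 0 < minPrior μ * Δ := mul_pos ((lt_inf'_iff _).2 fun ω _ => hμpos ω) hΔpos
  obtain ⟨π₀, ρ₀, hπ₀, hρ₀, hBR₀, hopt⟩ :=
    exists_lt_senderU_of_lt_OPTBP (μ := μ) (v := v) (u := u) (sub_lt_self _ (half_pos hε))
  set α := min 1 (γ / (minPrior μ * Δ) + ε / 2)
  have hα0 : 0 < α :=
    lt_min one_pos (add_pos_of_nonneg_of_pos (div_nonneg hγ hmΔ.le) (half_pos hε))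
  have hα1 : α ≤ 1 := min_le_left _ _
  have hαc : α ≤ γ / (minPrior μ * Δ) + ε / 2 := min_le_right _ _
  have hγα : γ < α * (minPrior μ * Δ) := (div_lt_iff₀ hmΔ).1 (lt_min hγ1 (by linarith))
  have hπ₁ := hπ₀.revelationScheme hρ₀
  refine ⟨robustify (revelationScheme π₀ ρ₀) aOf α, hπ₁.robustify hα0.le hα1,
    fun ρ hρ hBR => ?_⟩
  rw [hBR.eq_obedient_of_robustify hμ hμpos hπ₁ (isObedient_revelationScheme hμ.1 hπ₀ hρ₀ hBR₀)
    hα0 hα1 hΔpos.le hΔ hOnto hγ hγα hρ]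
  have hrobust := senderU_robustify_obedient_ge (π := revelationScheme π₀ ρ₀) hμ.1
    (fun a ω => (hu a ω).1) aOf hα0.le
  rw [senderU_revelationScheme] at hrobust
  have hαT := mul_le_of_le_one_right hα0.le (senderU_le_one hμ hπ₀ hu hρ₀)
  linarith

/-- Lemma 2.4, lower bound: under Assumption A, with `μ_min > 0` and
`γ/(μ_min·Δ) < 1`, for every `ε > 0` there is a direct-revelation scheme guaranteeing the sender
at least `OPT^BP(μ) - γ/(μ_min·Δ) - ε` against every `γ`-best-responding strategy. -/
theorem bp_lower_bound
    {Ω A : Type*} [Fintype Ω] [Fintype A] [Nonempty Ω] [Nonempty A]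
    (μ : Ω → ℝ) (hμ : IsProb μ) (hμpos : ∀ ω, 0 < μ ω)
    (v : A → Ω → ℝ) (hv : ∀ a ω, 0 ≤ v a ω ∧ v a ω ≤ 1)
    (u : A → Ω → ℝ) (hu : ∀ a ω, 0 ≤ u a ω ∧ u a ω ≤ 1)
    -- Assumption A
    (aOf : Ω → A) (hBest : ∀ ω a, a ≠ aOf ω → v a ω < v (aOf ω) ω)
    (Δ : ℝ) (hΔpos : 0 < Δ) (hΔ : ∀ ω a, a ≠ aOf ω → Δ ≤ v (aOf ω) ω - v a ω)
    (hOnto : ∀ a, ∃ ω, aOf ω = a)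
    (γ : ℝ) (hγ : 0 ≤ γ) (hγ1 : γ / (minPrior μ * Δ) < 1) :
    ∀ ε > 0, ∃ π : Ω → A → ℝ, IsDist π ∧
      ∀ ρ : A → A → ℝ, IsDist ρ → IsBRStrategy μ π v γ ρ →
        OPTBP μ v u - γ / (minPrior μ * Δ) - ε ≤ senderU μ π u ρ :=
  bp_lower_bound_general μ hμ hμpos v u hu aOf Δ hΔpos hΔ hOnto γ hγ hγ1
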